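/- Let H be a Hopf algebra with bijective antipode S, and M a left H-module and left H-comodule satisfying the anti-Yetter-Drinfeld condition. Then the map M → M, m ↦ m⁽⁻¹⁾·m⁽⁰⁾ is a homomorphism of left H-comodules. -/

import Mathlib

/-!
Write the right-hand side of the AYD condition as `adjAct ∘ (id ⊗ Δ_M)`, where `adjAct` is the
action `h · (x ⊗ n) = h⁽¹⁾ x S⁻¹(h⁽³⁾) ⊗ h⁽²⁾ n`. Applied to `Δ_M m` and combined with
coassociativity of `Δ_M`, this gives, with `h = m⁽⁻¹⁾`,
`Δ_M(m⁽⁻¹⁾ m⁽⁰⁾) = h⁽¹⁾ h⁽⁴⁾ S⁻¹(h⁽³⁾) ⊗ h⁽²⁾ m⁽⁰⁾`.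
Applying `S`, which is an antihomomorphism, shows `h⁽²⁾ S⁻¹(h⁽¹⁾) = ε(h)`, so the right-hand
side collapses to `m⁽⁻¹⁾⁽¹⁾ ⊗ m⁽⁻¹⁾⁽²⁾ m⁽⁰⁾ = m⁽⁻¹⁾ ⊗ m⁽⁰⁾⁽⁻¹⁾ m⁽⁰⁾⁽⁰⁾`.
-/

open TensorProduct LinearMap Coalgebra

noncomputable section

variable (k : Type) [Field k] (H : Type) [Ring H] [HopfAlgebra k H]
variable (M : Type) [AddCommGroup M] [Module k M]

/-- The right-hand side `h⁽¹⁾m⁽⁻¹⁾S⁻¹(h⁽³⁾) ⊗ h⁽²⁾m⁽⁰⁾` of the left-left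
anti-Yetter-Drinfeld condition, as a linear map `H ⊗ M → H ⊗ M`, where `Sinv` plays
the role of the inverse of the antipode. -/
def aydRHSll (Sinv : H →ₗ[k] H) (act : H ⊗[k] M →ₗ[k] M)
    (coact : M →ₗ[k] H ⊗[k] M) : H ⊗[k] M →ₗ[k] H ⊗[k] M :=
  map (mul' k H ∘ₗ map (mul' k H) Sinv) act
    ∘ₗ (TensorProduct.assoc k (H ⊗[k] H) H (H ⊗[k] M)).symm.toLinearMap
    ∘ₗ map LinearMap.id
        ((TensorProduct.leftComm k H H M).toLinearMap
          ∘ₗ (TensorProduct.assoc k H H M).toLinearMap)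
    ∘ₗ (tensorTensorTensorComm k H (H ⊗[k] H) H M).toLinearMap
    ∘ₗ map (map LinearMap.id comul ∘ₗ comul) coact

/-- The left-left anti-Yetter-Drinfeld condition:
`Δ_M(h·m) = h⁽¹⁾m⁽⁻¹⁾S⁻¹(h⁽³⁾) ⊗ h⁽²⁾m⁽⁰⁾`. -/
def IsAYDll (Sinv : H →ₗ[k] H) (act : H ⊗[k] M →ₗ[k] M)
    (coact : M →ₗ[k] H ⊗[k] M) : Prop :=
  coact ∘ₗ act = aydRHSll k H M Sinv act coact

open HopfAlgebra

section InverseAntipode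

variable {R A : Type*} [CommSemiring R] [Semiring A] [HopfAlgebra R A] {Sinv : A →ₗ[R] A}

theorem mul_antipodeInv_lTensor_comm_comul
    (hS1 : Sinv ∘ₗ antipode R = LinearMap.id) (hS2 : antipode R ∘ₗ Sinv = LinearMap.id) :
    mul' R A ∘ₗ lTensor A Sinv ∘ₗ (TensorProduct.comm R A A).toLinearMap ∘ₗ comul
      = Algebra.linearMap R A ∘ₗ counit := by
  have inv (x : A) : Sinv (antipode R x) = x := congr($hS1 x)
  have hS : antipode R ∘ₗ mul' R A ∘ₗ lTensor A Sinv ∘ₗ (TensorProduct.comm R A A).toLinearMap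
      = mul' R A ∘ₗ lTensor A (antipode R) := by
    ext x y
    simp [antipode_mul_antidistrib, ← LinearMap.comp_apply (antipode R) Sinv, hS2]
  ext a
  calc _ = Sinv ((antipode R ∘ₗ mul' R A ∘ₗ lTensor A Sinv ∘ₗ
          (TensorProduct.comm R A A).toLinearMap) (comul a)) := (inv _).symm
    _ = Sinv (antipode R (algebraMap R A (counit a))) := by
        simp [hS, Algebra.algebraMap_eq_smul_one]
    _ = algebraMap R A (counit a) := inv _

end InverseAntipode

section AdjointAction

variable {k H M} (Sinv : H →ₗ[k] H) (act : H ⊗[k] M →ₗ[k] M)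

def adjMul : (H ⊗[k] (H ⊗[k] H)) ⊗[k] (H ⊗[k] M) →ₗ[k] H ⊗[k] M :=
  map (mul' k H ∘ₗ map (mul' k H) Sinv) act
    ∘ₗ (TensorProduct.assoc k (H ⊗[k] H) H (H ⊗[k] M)).symm.toLinearMap
    ∘ₗ map LinearMap.id
        ((TensorProduct.leftComm k H H M).toLinearMap
          ∘ₗ (TensorProduct.assoc k H H M).toLinearMap)
    ∘ₗ (tensorTensorTensorComm k H (H ⊗[k] H) H M).toLinearMap

def adjAct : H ⊗[k] (H ⊗[k] M) →ₗ[k] H ⊗[k] M :=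
  adjMul Sinv act ∘ₗ rTensor (H ⊗[k] M) (lTensor H comul ∘ₗ comul)

theorem aydRHSll_eq_adjAct_comp (coact : M →ₗ[k] H ⊗[k] M) :
    aydRHSll k H M Sinv act coact = adjAct Sinv act ∘ₗ lTensor H coact := by
  rw [adjAct, comp_assoc, rTensor_comp_lTensor]
  rfl

theorem adjAct_comp_assoc :
    adjAct Sinv act ∘ₗ (TensorProduct.assoc k H H M).toLinearMap
      = adjMul Sinv act ∘ₗ (TensorProduct.assoc k (H ⊗[k] (H ⊗[k] H)) H M).toLinearMap
          ∘ₗ rTensor M (rTensor H (lTensor H comul ∘ₗ comul)) := by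
  ext x y n
  simp [adjAct]

def outerMulMiddleAct : (H ⊗[k] (H ⊗[k] H)) ⊗[k] M →ₗ[k] H ⊗[k] M :=
  map (mul' k H) act ∘ₗ (TensorProduct.assoc k H H (H ⊗[k] M)).symm.toLinearMap
    ∘ₗ lTensor H ((TensorProduct.leftComm k H H M).toLinearMap)
    ∘ₗ lTensor H ((TensorProduct.assoc k H H M).toLinearMap)
    ∘ₗ (TensorProduct.assoc k H (H ⊗[k] H) M).toLinearMap

@[simp]
theorem outerMulMiddleAct_tmul (x y c : H) (n : M) :
    outerMulMiddleAct act ((x ⊗ₜ (y ⊗ₜ c)) ⊗ₜ n) = (x * c) ⊗ₜ act (y ⊗ₜ n) := rfl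

theorem adjMul_reassoc_eq_outerMulMiddleAct :
    (adjMul Sinv act ∘ₗ (TensorProduct.assoc k (H ⊗[k] (H ⊗[k] H)) H M).toLinearMap)
      ∘ₗ rTensor M ((TensorProduct.assoc k H (H ⊗[k] H) H).symm.toLinearMap
        ∘ₗ lTensor H (TensorProduct.assoc k H H H).symm.toLinearMap)
    = outerMulMiddleAct act ∘ₗ rTensor M (lTensor H (lTensor H
        (mul' k H ∘ₗ lTensor H Sinv ∘ₗ (TensorProduct.comm k H H).toLinearMap))) := by
  ext x y z w n
  simp [adjMul, mul_assoc]

theorem outerMulMiddleAct_comp_counit :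
    outerMulMiddleAct act ∘ₗ
        rTensor M (lTensor H (lTensor H (Algebra.linearMap k H ∘ₗ counit) ∘ₗ comul))
      = lTensor H act ∘ₗ (TensorProduct.assoc k H H M).toLinearMap := by
  have counit_right : lTensor H (Algebra.linearMap k H ∘ₗ counit) ∘ₗ comul
      = lTensor H (Algebra.linearMap k H) ∘ₗ (TensorProduct.mk k H k).flip 1 := by
    rw [lTensor_comp, comp_assoc, Coalgebra.lTensor_counit_comp_comul]
  rw [counit_right]
  ext x y n
  simp

theorem adjAct_comp_assoc_comp_rTensor_comul
    (hS1 : Sinv ∘ₗ antipode k = LinearMap.id)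
    (hS2 : antipode k ∘ₗ Sinv = LinearMap.id) :
    adjAct Sinv act ∘ₗ (TensorProduct.assoc k H H M).toLinearMap ∘ₗ rTensor M comul
      = lTensor H act ∘ₗ (TensorProduct.assoc k H H M).toLinearMap ∘ₗ rTensor M comul := by
  have coassoc₄ : rTensor H (lTensor H comul ∘ₗ comul) ∘ₗ comul
      = ((TensorProduct.assoc k H (H ⊗[k] H) H).symm.toLinearMap
          ∘ₗ lTensor H (TensorProduct.assoc k H H H).symm.toLinearMap)
        ∘ₗ (lTensor H (lTensor H comul ∘ₗ comul) ∘ₗ (comul (R := k) (A := H))) := by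
    simp only [coassoc_simps]
  have antipode_inv := mul_antipodeInv_lTensor_comm_comul hS1 hS2
  calc _ = (adjMul Sinv act ∘ₗ (TensorProduct.assoc k (H ⊗[k] (H ⊗[k] H)) H M).toLinearMap)
        ∘ₗ rTensor M (rTensor H (lTensor H comul ∘ₗ comul) ∘ₗ comul) := by
        rw [rTensor_comp, ← comp_assoc, adjAct_comp_assoc]; rfl
    _ = outerMulMiddleAct act ∘ₗ rTensor M (lTensor H (lTensor H
          (mul' k H ∘ₗ lTensor H Sinv ∘ₗ (TensorProduct.comm k H H).toLinearMap))
          ∘ₗ (lTensor H (lTensor H comul ∘ₗ comul) ∘ₗ comul)) := by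
        rw [coassoc₄, rTensor_comp, ← comp_assoc, adjMul_reassoc_eq_outerMulMiddleAct]
        simp only [rTensor_comp, comp_assoc]
    _ = outerMulMiddleAct act ∘ₗ
          rTensor M
            (lTensor H (lTensor H (Algebra.linearMap k H ∘ₗ counit) ∘ₗ comul) ∘ₗ comul) := by
        rw [← antipode_inv]
        simp only [lTensor_comp, comp_assoc]
    _ = _ := by
        rw [rTensor_comp, ← comp_assoc, outerMulMiddleAct_comp_counit]; rfl

end AdjointAction

theorem statement1
    (Sinv : H →ₗ[k] H)
    (hS1 : Sinv ∘ₗ HopfAlgebra.antipode (R := k) = LinearMap.id)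
    (hS2 : HopfAlgebra.antipode (R := k) ∘ₗ Sinv = LinearMap.id)
    (act : H ⊗[k] M →ₗ[k] M)
    (coact : M →ₗ[k] H ⊗[k] M)
    (hcoassoc : map LinearMap.id coact ∘ₗ coact =
      (TensorProduct.assoc k H H M).toLinearMap ∘ₗ map comul LinearMap.id ∘ₗ coact)
    (hayd : IsAYDll k H M Sinv act coact) :
    -- `m ↦ m⁽⁻¹⁾·m⁽⁰⁾` is a homomorphism of left `H`-comodules
    coact ∘ₗ (act ∘ₗ coact) = map LinearMap.id (act ∘ₗ coact) ∘ₗ coact := by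
  have hcoassoc' : lTensor H coact ∘ₗ coact
      = ((TensorProduct.assoc k H H M).toLinearMap ∘ₗ rTensor M comul) ∘ₗ coact := hcoassoc
  calc coact ∘ₗ act ∘ₗ coact = adjAct Sinv act ∘ₗ lTensor H coact ∘ₗ coact := by
        rw [← comp_assoc, hayd, aydRHSll_eq_adjAct_comp, comp_assoc]
    _ = lTensor H act ∘ₗ lTensor H coact ∘ₗ coact := by
        rw [hcoassoc', ← comp_assoc, adjAct_comp_assoc_comp_rTensor_comul Sinv act hS1 hS2,
          comp_assoc]
    _ = map LinearMap.id (act ∘ₗ coact) ∘ₗ coact := by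
        rw [← comp_assoc, ← lTensor_comp]
        rfl
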